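/- If a rule set R is RPC_s, then R never-terminates: some knowledge base with rule set R admits no finite chase tree. -/

import Mathlib

set_option maxHeartbeats 1000000

namespace DisjChase

open scoped Classical
noncomputable section

/-! ### Basic syntax -/

abbrev Var := ℕ
abbrev Pred := ℕ

/-- An atom over a type of terms `T`. -/
structure Atom (T : Type) where
  pred : Pred
  args : List T
deriving DecidableEq

def Atom.map {S T : Type} (f : S → T) (a : Atom S) : Atom T :=
  ⟨a.pred, a.args.map f⟩

/-- A (disjunctive existential) rule: a nonempty body and a nonempty list of
nonempty head conjunctions, all constant- and function-free (atoms over variables). -/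
structure Rule where
  body : List (Atom Var)
  heads : List (List (Atom Var))
  body_ne : body ≠ []
  heads_ne : heads ≠ []
  heads_conj_ne : ∀ h ∈ heads, h ≠ []

def Rule.branching (ρ : Rule) : ℕ := ρ.heads.length

def Rule.bodyVars (ρ : Rule) : List Var := (ρ.body.map Atom.args).flatten

/-- The frontier of a rule: the body variables that also occur in some head disjunct. -/
def Rule.frontierList (ρ : Rule) : List Var :=
  (ρ.bodyVars.filter fun x => ρ.heads.any fun h => h.any fun a => a.args.contains x).dedup

/-- A rule is datalog if it is deterministic and has no existentially quantified variables. -/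
def Rule.Datalog (ρ : Rule) : Prop :=
  ρ.branching = 1 ∧ ∀ h ∈ ρ.heads, ∀ a ∈ h, ∀ x ∈ a.args, x ∈ ρ.bodyVars

/-- A rule is deterministic if it has exactly one head disjunct. -/
def Rule.Deterministic (ρ : Rule) : Prop := ρ.branching = 1

/-- Constants: the special constant `⋆`, ordinary constants, the fresh constants
`c_f` (one for each skolem function symbol `f = f^ρ_{i,y}`), and the fresh constants
`c_x` (one for each variable `x`, used by `σ_uc`). -/
inductive Const where
  | star : Const
  | nat : ℕ → Const
  | skolemConst : Rule → ℕ → Var → Const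
  | varConst : Var → Const

/-- Ground terms: built from constants and the skolem function symbols `f^ρ_{i,y}`. -/
inductive GTerm where
  | const : Const → GTerm
  | func : Rule → ℕ → Var → List GTerm → GTerm

def GTerm.isFunctional : GTerm → Prop
  | .const _ => False
  | .func _ _ _ _ => True

/-- `GTerm.Subterm s t` : `s` is a subterm of `t`. -/
inductive GTerm.Subterm : GTerm → GTerm → Prop
  | refl (t : GTerm) : GTerm.Subterm t t
  | func {u s : GTerm} {args : List GTerm} (ρ : Rule) (i : ℕ) (y : Var) :
      s ∈ args → GTerm.Subterm u s → GTerm.Subterm u (GTerm.func ρ i y args)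

def GTerm.depth : GTerm → ℕ
  | .const _ => 1
  | .func _ _ _ args => 1 + (args.attach.map fun t => GTerm.depth t.1).foldr max 0
termination_by t => sizeOf t
decreasing_by
  have := List.sizeOf_lt_of_mem t.2
  simp only [GTerm.func.sizeOf_spec]
  omega

/-- A term is cyclic if it has a subterm of the form `f(s⃗)` with `f` occurring in `s⃗`. -/
def GTerm.Cyclic (t : GTerm) : Prop :=
  ∃ (ρ : Rule) (i : ℕ) (y : Var) (args : List GTerm),
    GTerm.Subterm (GTerm.func ρ i y args) t ∧
    ∃ s ∈ args, ∃ args' : List GTerm, GTerm.Subterm (GTerm.func ρ i y args') s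

/-- A `ρ`-cyclic term: a term `f(s⃗)` with `f` a function symbol of `sk(ρ)`
occurring also in `s⃗`. -/
def RuleCyclic (ρ : Rule) (t : GTerm) : Prop :=
  ∃ (i : ℕ) (y : Var) (args : List GTerm), t = GTerm.func ρ i y args ∧
    ∃ s ∈ args, ∃ args' : List GTerm, GTerm.Subterm (GTerm.func ρ i y args') s

/-! ### Substitutions, facts, triggers -/

abbrev Subst := Var → GTerm
abbrev Fact := Atom GTerm
abbrev FactSet := Set Fact

/-- The substitution mapping every variable `x` to the fresh constant `c_x`. -/
def sigmaUC : Subst := fun x => GTerm.const (Const.varConst x)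

structure Trigger where
  rule : Rule
  subst : Subst

/-- The skolemizing substitution for disjunct `i`: body variables are mapped by `σ`,
existential variables `y` to the skolem term `f^ρ_{i,y}` applied to the frontier images. -/
def skolemSubst (ρ : Rule) (i : ℕ) (σ : Subst) : Subst := fun y =>
  if y ∈ ρ.bodyVars then σ y
  else GTerm.func ρ i y (ρ.frontierList.map σ)

/-- `out_i(λ) = η_i(sk(ρ))σ` (0-indexed disjuncts). -/
def Trigger.out (lam : Trigger) (i : ℕ) : FactSet :=
  { f | ∃ a ∈ lam.rule.heads.getD i [], f = a.map (skolemSubst lam.rule i lam.subst) }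

def Trigger.outUnion (lam : Trigger) : FactSet :=
  { f | ∃ i < lam.rule.branching, f ∈ lam.out i }

def Trigger.Loaded (lam : Trigger) (F : FactSet) : Prop :=
  ∀ a ∈ lam.rule.body, a.map lam.subst ∈ F

def Trigger.Obsolete (lam : Trigger) (F : FactSet) : Prop :=
  ∃ h ∈ lam.rule.heads, ∃ σ' : Subst,
    (∀ x ∈ lam.rule.bodyVars, σ' x = lam.subst x) ∧ ∀ a ∈ h, a.map σ' ∈ F

/-- A fact set satisfies a rule if all triggers with this rule are not loaded or obsolete. -/
def SatisfiesRule (F : FactSet) (ρ : Rule) : Prop :=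
  ∀ σ : Subst, Trigger.Loaded ⟨ρ, σ⟩ F → Trigger.Obsolete ⟨ρ, σ⟩ F

/-- A ground term is over a rule set if all its function symbols come from
the skolemization of the rule set. -/
inductive GTerm.Over (R : Set Rule) : GTerm → Prop
  | const (c : Const) : GTerm.Over R (GTerm.const c)
  | func {ρ : Rule} {i : ℕ} {y : Var} {args : List GTerm} :
      ρ ∈ R → (∀ t ∈ args, GTerm.Over R t) → GTerm.Over R (GTerm.func ρ i y args)

def RTrigger (R : Set Rule) (lam : Trigger) : Prop :=
  lam.rule ∈ R ∧ ∀ x : Var, (lam.subst x).Over R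

/-- A function-free fact set (i.e., a database). -/
def FunctionFree (F : FactSet) : Prop :=
  ∀ a ∈ F, ∀ t ∈ a.args, ∃ c : Const, t = GTerm.const c

/-! ### Chase trees -/

/-- Iterated edge relation: paths of length `k`. -/
def EPow {V : Type} (E : V → V → Prop) : ℕ → V → V → Prop
  | 0 => Eq
  | n + 1 => fun a c => ∃ b, E a b ∧ EPow E n b c

/-- A chase tree for the knowledge base `⟨R, D⟩` (restricted chase with datalog priority). -/
structure ChaseTree (R : Set Rule) (D : FactSet) where
  V : Type
  E : V → V → Prop
  fl : V → FactSet
  tl : V → Trigger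
  root : V
  reach_root : ∀ v, Relation.ReflTransGen E root v
  no_in_root : ∀ v, ¬ E v root
  parent_unique : ∀ {u w v : V}, E u v → E w v → u = w
  root_label : fl root = D
  expand : ∀ v : V, (∃ c, E v c) →
    ∃ lam : Trigger, RTrigger R lam ∧ lam.Loaded (fl v) ∧ ¬ lam.Obsolete (fl v) ∧
      (¬ lam.rule.Datalog → ∀ ρ ∈ R, ρ.Datalog → SatisfiesRule (fl v) ρ) ∧
      ∃ f : Fin lam.rule.branching → V,
        Function.Injective f ∧ (∀ i, E v (f i)) ∧ (∀ c, E v c → ∃ i, c = f i) ∧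
        ∀ i : Fin lam.rule.branching, fl (f i) = fl v ∪ lam.out i.1 ∧ tl (f i) = lam
  leaf_sat : ∀ v : V, (∀ c, ¬ E v c) → ∀ ρ ∈ R, SatisfiesRule (fl v) ρ
  fairness : ∀ lam : Trigger, RTrigger R lam → ∀ v : V, lam.Loaded (fl v) →
    ∃ k : ℕ, ∀ u : V, EPow E k v u → lam.Obsolete (fl u)

/-- A branch of a chase tree: a maximal path starting at the root. -/
structure Branch {R : Set Rule} {D : FactSet} (T : ChaseTree R D) where
  seq : ℕ → Option T.V
  head : seq 0 = some T.root
  step_some : ∀ n v w, seq n = some v → seq (n + 1) = some w → T.E v w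
  step_max : ∀ n v, seq n = some v → (∃ c, T.E v c) → ∃ w, seq (n + 1) = some w
  step_leaf : ∀ n v, seq n = some v → (∀ c, ¬ T.E v c) → seq (n + 1) = none
  step_none : ∀ n, seq n = none → seq (n + 1) = none

/-- The result of a chase tree: the unions of the fact labels along its branches. -/
def ChaseTree.result {R : Set Rule} {D : FactSet} (T : ChaseTree R D) : Set FactSet :=
  { S | ∃ b : Branch T, S = { f | ∃ n v, b.seq n = some v ∧ f ∈ T.fl v } }

/-- A rule set never-terminates if some knowledge base with this rule set
admits no finite chase tree. -/
def NeverTerminates (R : Set Rule) : Prop :=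
  ∃ D : FactSet, FunctionFree D ∧ ¬ ∃ T : ChaseTree R D, Finite T.V

/-! ### Head-choices and cyclicity sequences -/

/-- A head-choice maps every rule of `R` to one of its (1-indexed) disjuncts. -/
def IsHeadChoice (R : Set Rule) (hc : Rule → ℕ) : Prop :=
  ∀ ρ ∈ R, 1 ≤ hc ρ ∧ hc ρ ≤ ρ.branching

def outHC (hc : Rule → ℕ) (lam : Trigger) : FactSet := lam.out (hc lam.rule - 1)

/-- `b` is the branch `branch(T,hc)` of `T`: every successive label is the parent's
label united with `out_hc` of the applied trigger. -/
def IsHcBranch {R : Set Rule} {D : FactSet} (T : ChaseTree R D) (hc : Rule → ℕ)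
    (b : Branch T) : Prop :=
  ∀ n v w, b.seq n = some v → b.seq (n + 1) = some w →
    T.fl w = T.fl v ∪ outHC hc (T.tl w)

/-- `λ` is g-unblockable for `⟨R,D⟩` and `hc`. -/
def GUnblockable (R : Set Rule) (D : FactSet) (hc : Rule → ℕ) (lam : Trigger) : Prop :=
  ∀ T : ChaseTree R D, ∀ b : Branch T, IsHcBranch T hc b →
    ∀ n v, b.seq n = some v → lam.Loaded (T.fl v) →
      ∃ m u, b.seq m = some u ∧ outHC hc lam ⊆ T.fl u

/-- `F_i(K, hc, Λ)` for a sequence `Λ` of triggers (0-indexed: `Λ k` is applied to `F_k`). -/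
def chaseSeq (D : FactSet) (hc : Rule → ℕ) (Λ : ℕ → Trigger) : ℕ → FactSet
  | 0 => D
  | n + 1 => chaseSeq D hc Λ n ∪ outHC hc (Λ n)

def SeqLoaded (D : FactSet) (hc : Rule → ℕ) (Λ : ℕ → Trigger) : Prop :=
  ∀ n, (Λ n).Loaded (chaseSeq D hc Λ n)

/-- `t` occurs in the fact set `F`. -/
def GTerm.OccursIn (t : GTerm) (F : FactSet) : Prop :=
  ∃ a ∈ F, ∃ s ∈ a.args, t.Subterm s

def SeqGrowing (D : FactSet) (hc : Rule → ℕ) (Λ : ℕ → Trigger) : Prop :=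
  ∀ i, ∃ j, i < j ∧ ∃ t : GTerm,
    t.OccursIn (chaseSeq D hc Λ j) ∧ ¬ t.OccursIn (chaseSeq D hc Λ i)

/-- A cyclicity sequence: an (infinite) sequence of `R`-triggers that is loaded,
growing, and g-unblockable. -/
def CyclicitySequence (R : Set Rule) (D : FactSet) (hc : Rule → ℕ) (Λ : ℕ → Trigger) : Prop :=
  (∀ n, RTrigger R (Λ n)) ∧ SeqLoaded D hc Λ ∧ SeqGrowing D hc Λ ∧
    ∀ n, GUnblockable R D hc (Λ n)

/-! ### Over-approximations and unblockability -/

/-- `F` is an over-approximation of `R` and `hc` before `λ`. -/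
def IsOverApprox (R : Set Rule) (hc : Rule → ℕ) (lam : Trigger) (F : FactSet) : Prop :=
  ∃ h : GTerm → GTerm,
    (∀ x ∈ lam.rule.frontierList, h (lam.subst x) = lam.subst x) ∧
    ∀ D : FactSet, FunctionFree D → ∀ T : ChaseTree R D, ∀ b : Branch T,
      IsHcBranch T hc b → ∀ n u, b.seq n = some u → ¬ outHC hc lam ⊆ T.fl u →
        (Atom.map h) '' (T.fl u) ⊆ F

/-- The substitution mapping the frontier of `ρ` (in order) to the given argument list. -/
def frontierSubst (ρ : Rule) (args : List GTerm) : Subst := fun x =>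
  args.getD (ρ.frontierList.idxOf x) (GTerm.const Const.star)

/-- Birth facts of a term. -/
def GTerm.births : GTerm → FactSet
  | .const _ => ∅
  | .func ρ i _ args =>
      Trigger.out ⟨ρ, frontierSubst ρ args⟩ i ∪
        (args.attach.map fun s => GTerm.births s.1).foldr (· ∪ ·) ∅
termination_by t => sizeOf t
decreasing_by
  have := List.sizeOf_lt_of_mem s.2
  simp only [GTerm.func.sizeOf_spec]
  omega

/-- Birth facts of a trigger. -/
def Trigger.births (lam : Trigger) : FactSet :=
  { f | ∃ x ∈ lam.rule.frontierList, f ∈ GTerm.births (lam.subst x) }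

/-- The term-skeleton of a trigger: the terms occurring in its birth facts together
with the constants in frontier positions. -/
def skel (lam : Trigger) : Set GTerm :=
  { t | ∃ a ∈ lam.births, ∃ s ∈ a.args, t.Subterm s } ∪
  { t | ∃ x ∈ lam.rule.frontierList, lam.subst x = t ∧ ∃ c, t = GTerm.const c }

/-- `h^⋆_λ`. -/
def hstar (lam : Trigger) : GTerm → GTerm := fun t =>
  if t ∈ skel lam then t else GTerm.const Const.star

/-- `h^uc_λ`. -/
def huc (lam : Trigger) : GTerm → GTerm := fun t =>
  if t ∈ skel lam then t
  else
    match t with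
    | GTerm.func ρ i y _ => GTerm.const (Const.skolemConst ρ i y)
    | GTerm.const (Const.skolemConst ρ i y) => GTerm.const (Const.skolemConst ρ i y)
    | _ => GTerm.const Const.star

def hImg (h : GTerm → GTerm) (F : FactSet) : FactSet := (Atom.map h) '' F

def predsOf (R : Set Rule) : Set Pred :=
  { p | ∃ ρ ∈ R, (∃ a ∈ ρ.body, a.pred = p) ∨ ∃ h ∈ ρ.heads, ∃ a ∈ h, a.pred = p }

def skelConsts (lam : Trigger) : Set Const :=
  { c | ∃ t ∈ skel lam, GTerm.Subterm (GTerm.const c) t }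

/-- All facts over a predicate of `R` and constants from `skel(λ) ∪ {⋆}`. -/
def baseFacts (R : Set Rule) (lam : Trigger) : FactSet :=
  { a | a.pred ∈ predsOf R ∧
    ∀ t ∈ a.args, ∃ c : Const, t = GTerm.const c ∧ (c ∈ skelConsts lam ∨ c = Const.star) }

def Oclosed (R : Set Rule) (hc : Rule → ℕ) (lam : Trigger) (h : GTerm → GTerm)
    (F : FactSet) : Prop :=
  baseFacts R lam ⊆ F ∧ lam.births ⊆ F ∧
  ∀ lam' : Trigger, RTrigger R lam' → lam'.Loaded F → outHC hc lam' ≠ outHC hc lam →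
    hImg h (outHC hc lam') ⊆ F

/-- `O(R, hc, λ, h)`. -/
def Oset (R : Set Rule) (hc : Rule → ℕ) (lam : Trigger) (h : GTerm → GTerm) : FactSet :=
  ⋂₀ { F | Oclosed R hc lam h F }

def OclosedND (R : Set Rule) (lam : Trigger) (h : GTerm → GTerm) (F : FactSet) : Prop :=
  baseFacts R lam ⊆ F ∧ lam.births ⊆ F ∧
  ∀ lam' : Trigger, RTrigger R lam' → lam'.Loaded F →
    (lam'.rule = lam.rule → ∃ i < lam.rule.branching, lam'.out i ≠ lam.out i) →
    hImg h lam'.outUnion ⊆ F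

/-- `O(R, λ, h)`. -/
def OsetND (R : Set Rule) (lam : Trigger) (h : GTerm → GTerm) : FactSet :=
  ⋂₀ { F | OclosedND R lam h F }

/-- `λ` is `⋆`-unblockable for `R`. -/
def StarUnblockable (R : Set Rule) (lam : Trigger) : Prop :=
  lam.rule.Datalog ∨ ¬ lam.Obsolete (OsetND R lam (hstar lam))

/-- `λ` is `uc`-unblockable for `R` and `hc`. -/
def UcUnblockable (R : Set Rule) (hc : Rule → ℕ) (lam : Trigger) : Prop :=
  lam.rule.Datalog ∨ ¬ lam.Obsolete (Oset R hc lam (huc lam))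

/-! ### Constant mappings and reversibility -/

abbrev CMap := Const → Option GTerm

/-- Apply a constant mapping to a ground term, replacing constants in its domain. -/
def applyCM (g : CMap) : GTerm → GTerm
  | .const c => (g c).getD (GTerm.const c)
  | .func ρ i y args => GTerm.func ρ i y (args.attach.map fun s => applyCM g s.1)
termination_by t => sizeOf t
decreasing_by
  have := List.sizeOf_lt_of_mem s.2
  simp only [GTerm.func.sizeOf_spec]
  omega

/-- `g` is reversible for the (subterm-closed) set of terms `𝒯`. -/
def Reversible (g : CMap) (𝒯 : Set GTerm) : Prop :=
  (∀ c : Const, GTerm.const c ∈ 𝒯 → (g c).isSome) ∧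
  (∀ t ∈ 𝒯, ∀ s ∈ 𝒯, t ≠ s → applyCM g t ≠ applyCM g s) ∧
  (∀ c : Const, GTerm.const c ∈ 𝒯 →
    ∀ s : GTerm, s.Subterm (applyCM g (GTerm.const c)) →
      ∀ u ∈ 𝒯, u.isFunctional → applyCM g u ≠ s)

def cmImg (g : CMap) (F : FactSet) : FactSet := (Atom.map (applyCM g)) '' F

/-! ### Cyclicity prefixes -/

/-- The rule-database `D_ρ = body(ρ)σ_uc`. -/
def ruleDB (ρ : Rule) : FactSet := { f | ∃ a ∈ ρ.body, f = a.map sigmaUC }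

/-- A cyclicity prefix for `R`, `hc`, and `ρ ∈ R`. -/
structure CyclicityPrefix (R : Set Rule) (hc : Rule → ℕ) (ρ : Rule) where
  n : ℕ
  npos : 0 < n
  trig : ℕ → Trigger
  g : CMap
  rtrig : ∀ i ≤ n, RTrigger R (trig i)
  first_rule : (trig 0).rule = ρ
  first_subst : (trig 0).subst = sigmaUC
  loaded : ∀ i ≤ n, (trig i).Loaded (chaseSeq (ruleDB ρ) hc trig i)
  uc_unbl : ∀ i, 1 ≤ i → i ≤ n → UcUnblockable R hc (trig i)
  g_unbl : GUnblockable R (ruleDB ρ) hc (trig 0)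
  last_rule : (trig n).rule = ρ
  last_cyclic : ∃ t : GTerm, RuleCyclic ρ t ∧ t.OccursIn (outHC hc (trig n))
  g_comp : applyCM g ∘ (trig 0).subst = (trig n).subst
  g_rev : ∀ i, 1 ≤ i → i ≤ n → ∀ j : ℕ,
    Reversible g (skel ⟨(trig i).rule, (applyCM g)^[j] ∘ (trig i).subst⟩)

/-- The infinite sequence `Λ^∞` obtained by unfolding a cyclicity prefix. -/
def prefixInf {R : Set Rule} {hc : Rule → ℕ} {ρ : Rule} (P : CyclicityPrefix R hc ρ) :
    ℕ → Trigger := fun k =>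
  if k = 0 then P.trig 0
  else ⟨(P.trig ((k - 1) % P.n + 1)).rule,
        (applyCM P.g)^[(k - 1) / P.n] ∘ (P.trig ((k - 1) % P.n + 1)).subst⟩

/-! ### RPC, RPC_s, DRPC -/

def RPCclosed (R : Set Rule) (hc : Rule → ℕ) (ρ : Rule) (F : FactSet) : Prop :=
  ruleDB ρ ⊆ F ∧ outHC hc ⟨ρ, sigmaUC⟩ ⊆ F ∧
  ∀ lam : Trigger, RTrigger R lam →
    (∀ x ∈ lam.rule.bodyVars, ¬ (lam.subst x).Cyclic) →
    lam.Loaded F → UcUnblockable R hc lam →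
    (lam.rule = ρ → Set.InjOn lam.subst { x | x ∈ lam.rule.bodyVars }) →
    outHC hc lam ⊆ F

/-- `RPC(R, hc, ρ)`. -/
def RPCset (R : Set Rule) (hc : Rule → ℕ) (ρ : Rule) : FactSet :=
  ⋂₀ { F | RPCclosed R hc ρ F }

/-- `R` is restricted prefix-cyclic. -/
def IsRPC (R : Set Rule) : Prop :=
  ∃ hc : Rule → ℕ, IsHeadChoice R hc ∧
    ∃ ρ ∈ R, ∃ t : GTerm, RuleCyclic ρ t ∧ t.OccursIn (RPCset R hc ρ)

/-- The head-choice `hc_i`. -/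
def hcIdx (i : ℕ) : Rule → ℕ := fun ρ => if i ≤ ρ.branching then i else ρ.branching

/-- `branching(R)`: the least bound on the branching of the rules of `R`. -/
def branchingR (R : Set Rule) : ℕ := sInf { b | ∀ ρ ∈ R, ρ.branching ≤ b }

/-- `R` is `RPC_s`. -/
def IsRPCs (R : Set Rule) : Prop :=
  ∃ i : ℕ, 1 ≤ i ∧ i ≤ branchingR R ∧
    ∃ ρ ∈ R, ∃ t : GTerm, RuleCyclic ρ t ∧ t.OccursIn (RPCset R (hcIdx i) ρ)

def DRPCclosed (R : Set Rule) (ρ : Rule) (F : FactSet) : Prop :=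
  ruleDB ρ ⊆ F ∧ Trigger.out ⟨ρ, sigmaUC⟩ 0 ⊆ F ∧
  ∀ lam : Trigger, RTrigger R lam → lam.rule.Deterministic →
    (∀ x ∈ lam.rule.bodyVars, ¬ (lam.subst x).Cyclic) →
    lam.Loaded F → StarUnblockable R lam →
    (lam.rule = ρ → Set.InjOn lam.subst { x | x ∈ lam.rule.bodyVars }) →
    lam.out 0 ⊆ F

/-- `DRPC(R, ρ)`. -/
def DRPCset (R : Set Rule) (ρ : Rule) : FactSet :=
  ⋂₀ { F | DRPCclosed R ρ F }

/-- `R` is deterministic restricted prefix-cyclic. -/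
def IsDRPC (R : Set Rule) : Prop :=
  ∃ ρ ∈ R, ρ.Deterministic ∧ ∃ t : GTerm, RuleCyclic ρ t ∧ t.OccursIn (DRPCset R ρ)


/-! ### Auxiliary development for the proof -/

section Aux

theorem GTerm.ind' (P : GTerm → Prop) (h1 : ∀ c, P (.const c))
    (h2 : ∀ ρ i y args, (∀ t ∈ args, P t) → P (.func ρ i y args)) : ∀ t, P t := by
  intro t
  have : ∀ n (t : GTerm), sizeOf t ≤ n → P t := by
    intro n
    induction n with
    | zero => intro t ht; cases t <;> simp at ht
    | succ n ih =>
      intro t ht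
      cases t with
      | const c => exact h1 c
      | func ρ i y args =>
        apply h2
        intro s hs
        apply ih
        have := List.sizeOf_lt_of_mem hs
        simp only [GTerm.func.sizeOf_spec] at ht
        omega
  exact this (sizeOf t) t le_rfl

theorem subterm_const {u : GTerm} {c : Const} (h : GTerm.Subterm u (.const c)) : u = .const c := by
  cases h; rfl

theorem subterm_func {u : GTerm} {ρ i y args} (h : GTerm.Subterm u (.func ρ i y args)) :
    u = .func ρ i y args ∨ ∃ s ∈ args, GTerm.Subterm u s := by
  cases h with
  | refl => exact Or.inl rfl
  | func _ _ _ hs hsub => exact Or.inr ⟨_, hs, hsub⟩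

theorem GTerm.Subterm.trans' {a b c : GTerm} (h1 : GTerm.Subterm a b) (h2 : GTerm.Subterm b c) :
    GTerm.Subterm a c := by
  induction h2 with
  | refl => exact h1
  | func ρ i y hs _ ih => exact .func ρ i y hs ih

theorem applyCM_const (g : CMap) (c : Const) :
    applyCM g (.const c) = (g c).getD (.const c) := by rw [applyCM]

theorem applyCM_func (g : CMap) (ρ i y args) :
    applyCM g (.func ρ i y args) = .func ρ i y (args.map (applyCM g)) := by
  rw [applyCM]; congr 1; exact List.attach_map_val

theorem births_func (ρ i y args) :
    GTerm.births (.func ρ i y args) =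
      Trigger.out ⟨ρ, frontierSubst ρ args⟩ i ∪
        (args.attach.map fun s => GTerm.births s.1).foldr (· ∪ ·) ∅ := by
  rw [GTerm.births]

theorem births_const (c : Const) : GTerm.births (.const c) = ∅ := by rw [GTerm.births]

theorem mem_foldr_union {f : Fact} : ∀ (l : List FactSet),
    f ∈ l.foldr (· ∪ ·) ∅ ↔ ∃ S ∈ l, f ∈ S := by
  intro l
  induction l with
  | nil => simp
  | cons S l ih =>
    simp only [List.foldr_cons, Set.mem_union, ih, List.mem_cons]
    constructor
    · rintro (h | ⟨S', hS', hf⟩)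
      · exact ⟨S, Or.inl rfl, h⟩
      · exact ⟨S', Or.inr hS', hf⟩
    · rintro ⟨S', (rfl | hS'), hf⟩
      · exact Or.inl hf
      · exact Or.inr ⟨S', hS', hf⟩

theorem mem_births_func {f : Fact} {ρ i y args} :
    f ∈ GTerm.births (.func ρ i y args) ↔
      f ∈ Trigger.out ⟨ρ, frontierSubst ρ args⟩ i ∨ ∃ s ∈ args, f ∈ GTerm.births s := by
  rw [births_func]
  simp only [Set.mem_union, mem_foldr_union]
  constructor
  · rintro (h | ⟨S, hS, hf⟩)
    · exact Or.inl h
    · rw [List.mem_map] at hS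
      obtain ⟨⟨s, hs⟩, _, rfl⟩ := hS
      exact Or.inr ⟨s, hs, hf⟩
  · rintro (h | ⟨s, hs, hf⟩)
    · exact Or.inl h
    · exact Or.inr ⟨GTerm.births s, List.mem_map.2 ⟨⟨s, hs⟩, List.mem_attach _ _, rfl⟩, hf⟩

theorem Atom.map_map {S T U : Type} (f : T → U) (g : S → T) (a : Atom S) :
    Atom.map f (Atom.map g a) = Atom.map (f ∘ g) a := by
  simp [Atom.map, List.map_map]

theorem Atom.pred_map {S T : Type} (f : S → T) (a : Atom S) : (a.map f).pred = a.pred := rfl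

theorem mem_args_map {S T : Type} {f : S → T} {a : Atom S} {x : S} (h : x ∈ a.args) :
    f x ∈ (a.map f).args := by
  simp only [Atom.map]
  exact List.mem_map.2 ⟨x, h, rfl⟩

theorem mem_bodyVars_iff {ρ : Rule} {x : Var} :
    x ∈ ρ.bodyVars ↔ ∃ b ∈ ρ.body, x ∈ b.args := by
  rw [Rule.bodyVars, List.mem_flatten]
  constructor
  · rintro ⟨l, hl, hx⟩
    rw [List.mem_map] at hl
    obtain ⟨b, hb, rfl⟩ := hl
    exact ⟨b, hb, hx⟩
  · rintro ⟨b, hb, hx⟩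
    exact ⟨b.args, List.mem_map.2 ⟨b, hb, rfl⟩, hx⟩

theorem mem_getD_nil {α : Type _} {l : List (List α)} {i : ℕ} {a : α}
    (h : a ∈ l.getD i []) : l.getD i [] ∈ l := by
  by_cases hi : i < l.length
  · rw [List.getD_eq_getElem l [] hi]; exact List.getElem_mem _
  · rw [List.getD_eq_default l [] (by omega)] at h; simp at h

theorem mem_frontier_of {ρ : Rule} {x : Var} {h : List (Atom Var)} {a : Atom Var}
    (hx : x ∈ ρ.bodyVars) (hh : h ∈ ρ.heads) (ha : a ∈ h) (hxa : x ∈ a.args) :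
    x ∈ ρ.frontierList := by
  rw [Rule.frontierList, List.mem_dedup, List.mem_filter]
  refine ⟨hx, ?_⟩
  rw [List.any_eq_true]
  refine ⟨h, hh, ?_⟩
  rw [List.any_eq_true]
  exact ⟨a, ha, List.elem_eq_true_of_mem hxa⟩

theorem frontier_sub_bodyVars {ρ : Rule} {x : Var} (h : x ∈ ρ.frontierList) :
    x ∈ ρ.bodyVars := by
  rw [Rule.frontierList, List.mem_dedup, List.mem_filter] at h
  exact h.1

theorem frontier_nodup (ρ : Rule) : ρ.frontierList.Nodup := List.nodup_dedup _

theorem frontierSubst_mem {ρ : Rule} {args : List GTerm} {x : Var}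
    (hlen : args.length = ρ.frontierList.length) (hx : x ∈ ρ.frontierList) :
    frontierSubst ρ args x ∈ args := by
  rw [frontierSubst]
  have hlt : ρ.frontierList.idxOf x < args.length := by
    rw [hlen]; exact List.idxOf_lt_length_iff.2 hx
  rw [List.getD_eq_getElem _ _ hlt]
  exact List.getElem_mem _

theorem frontier_mapback {ρ : Rule} {args : List GTerm}
    (hlen : args.length = ρ.frontierList.length) :
    ρ.frontierList.map (frontierSubst ρ args) = args := by
  apply List.ext_getElem
  · rw [List.length_map, hlen]
  · intro j h1 h2
    rw [List.getElem_map]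
    rw [frontierSubst]
    have hj : j < ρ.frontierList.length := by rwa [List.length_map] at h1
    rw [List.Nodup.idxOf_getElem (frontier_nodup ρ) j hj]
    rw [List.getD_eq_getElem _ _ h2]

theorem mem_out {f : Fact} {lam : Trigger} {i : ℕ} :
    f ∈ lam.out i ↔ ∃ a ∈ lam.rule.heads.getD i [], f = a.map (skolemSubst lam.rule i lam.subst) :=
  Iff.rfl

theorem skolemSubst_body {ρ : Rule} {i : ℕ} {σ : Subst} {v : Var} (h : v ∈ ρ.bodyVars) :
    skolemSubst ρ i σ v = σ v := if_pos h

theorem skolemSubst_ex {ρ : Rule} {i : ℕ} {σ : Subst} {v : Var} (h : v ∉ ρ.bodyVars) :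
    skolemSubst ρ i σ v = .func ρ i v (ρ.frontierList.map σ) := if_neg h

end Aux


/-- `t` contains no constant of the form `c_x`. -/
def NoVC (t : GTerm) : Prop := ∀ v, ¬ GTerm.Subterm (.const (.varConst v)) t

def NoVCF (a : Fact) : Prop := ∀ t ∈ a.args, NoVC t

/-- The key dichotomy: some disjunct of `ρ` can be satisfied using only the body facts
of `ρ` and facts free of the constants `c_x`. -/
def BADs (ρ : Rule) : Prop :=
  ∃ h ∈ ρ.heads, ∃ σ' : Subst, (∀ x ∈ ρ.bodyVars, σ' x = sigmaUC x) ∧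
    ∀ a ∈ h, a.map σ' ∈ ruleDB ρ ∨ NoVCF (a.map σ')


section PartB

/-- `t` contains no function symbol of `sk(ρ)`. -/
def NRF (ρ : Rule) (t : GTerm) : Prop := ∀ i y as, ¬ GTerm.Subterm (.func ρ i y as) t

/-- `t` contains no ρ-nesting: whenever `f^ρ(as)` is a subterm, the `as` are ρ-function-free. -/
def RNF (ρ : Rule) (t : GTerm) : Prop :=
  ∀ i y as, GTerm.Subterm (.func ρ i y as) t → ∀ s ∈ as, NRF ρ s

theorem NRF_const (ρ : Rule) (c : Const) : NRF ρ (.const c) := by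
  intro i y as h
  exact absurd (subterm_const h) (by simp)

theorem RNF_const (ρ : Rule) (c : Const) : RNF ρ (.const c) := by
  intro i y as h
  exact absurd (subterm_const h) (by simp)

theorem NRF.to_RNF {ρ : Rule} {t : GTerm} (h : NRF ρ t) : RNF ρ t := by
  intro i y as hsub
  exact absurd hsub (h i y as)

theorem RNF_func {ρ ρ₀ : Rule} {i y : ℕ} {L : List GTerm}
    (h1 : ∀ ℓ ∈ L, RNF ρ ℓ) (h2 : ρ₀ = ρ → ∀ ℓ ∈ L, NRF ρ ℓ) :
    RNF ρ (.func ρ₀ i y L) := by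
  intro i' y' as hsub s hs
  rcases subterm_func hsub with heq | ⟨ℓ, hℓ, hsub'⟩
  · obtain ⟨hρ, _, _, hargs⟩ := GTerm.func.inj heq
    exact h2 hρ.symm s (hargs ▸ hs)
  · exact h1 ℓ hℓ i' y' as hsub' s hs

/-- Well-formed terms of the RPC construction. -/
inductive CWF (R : Set Rule) (hc : Rule → ℕ) (ρ : Rule) : GTerm → Prop
  | var (v : Var) : CWF R hc ρ (.const (.varConst v))
  | func (ρ' : Rule) (y : Var) (args : List GTerm) (hR : ρ' ∈ R)
      (hy : ∃ a ∈ ρ'.heads.getD (hc ρ' - 1) [], y ∈ a.args)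
      (hyb : y ∉ ρ'.bodyVars)
      (hlen : args.length = ρ'.frontierList.length)
      (hargs : ∀ t ∈ args, CWF R hc ρ t)
      (hstrat : ρ' = ρ → ∀ t ∈ args, NRF ρ t) :
      CWF R hc ρ (.func ρ' (hc ρ' - 1) y args)

variable {R : Set Rule} {hc : Rule → ℕ} {ρ : Rule}

theorem CWF.subterm {t s : GTerm} (hs : GTerm.Subterm s t) (h : CWF R hc ρ t) :
    CWF R hc ρ s := by
  induction h with
  | var v => rw [subterm_const hs]; exact .var v
  | func ρ' y args hR hy hyb hlen hargs hstrat ih =>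
    rcases subterm_func hs with rfl | ⟨u, hu, hsub⟩
    · exact .func ρ' y args hR hy hyb hlen hargs hstrat
    · exact ih u hu hsub



theorem CWF.rnf {t : GTerm} (h : CWF R hc ρ t) : RNF ρ t := by
  induction h with
  | var v => exact RNF_const ρ _
  | func ρ' y args hR hy hyb hlen hargs hstrat ih =>
    exact RNF_func (fun ℓ hℓ => ih ℓ hℓ) (fun hρ => hstrat hρ)

theorem CWF.clean {t : GTerm} (h : CWF R hc ρ t) :
    ∀ c, GTerm.Subterm (.const c) t → ∃ v, c = .varConst v := by
  induction h with
  | var v =>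
    intro c hsub
    obtain ⟨rfl⟩ := GTerm.const.inj (subterm_const hsub)
    exact ⟨v, rfl⟩
  | func ρ' y args hR hy hyb hlen hargs hstrat ih =>
    intro c hsub
    rcases subterm_func hsub with heq | ⟨u, hu, hsub'⟩
    · exact absurd heq (by simp)
    · exact ih u hu c hsub'

theorem CWF.over {t : GTerm} (h : CWF R hc ρ t) : t.Over R := by
  induction h with
  | var v => exact .const _
  | func ρ' y args hR hy hyb hlen hargs hstrat ih => exact .func hR ih

theorem CWF.const_inv {c : Const} (h : CWF R hc ρ (.const c)) : ∃ v, c = .varConst v :=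
  h.clean c (.refl _)

/-- Birth facts of well-formed terms have well-formed arguments. -/
theorem CWF.births {t : GTerm} (h : CWF R hc ρ t) :
    ∀ f ∈ GTerm.births t, ∀ s ∈ f.args, CWF R hc ρ s := by
  induction h with
  | var v => rw [births_const]; simp
  | func ρ' y args hR hy hyb hlen hargs hstrat ih =>
    intro f hf s hs
    rw [mem_births_func] at hf
    rcases hf with hf | ⟨u, hu, hf⟩
    · -- f is in the out-set of the birth trigger
      obtain ⟨a, ha, rfl⟩ := hf
      simp only [Atom.map, List.mem_map] at hs
      obtain ⟨v, hv, rfl⟩ := hs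
      by_cases hvb : v ∈ Rule.bodyVars ρ'
      · rw [skolemSubst_body hvb]
        have hvf : v ∈ ρ'.frontierList :=
          mem_frontier_of hvb (mem_getD_nil ha) ha hv
        exact hargs _ (frontierSubst_mem hlen hvf)
      · rw [skolemSubst_ex hvb, frontier_mapback hlen]
        exact CWF.func ρ' v args hR ⟨a, ha, hv⟩ hvb hlen hargs hstrat
    · exact ih u hu f hf s hs


theorem skel_subterm_closed {lam : Trigger} {s u : GTerm}
    (hs : s ∈ skel lam) (hu : GTerm.Subterm u s) : u ∈ skel lam := by
  rcases hs with ⟨a, ha, s', hs', hsub⟩ | ⟨x, hx, heq, c, rfl⟩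
  · exact Or.inl ⟨a, ha, s', hs', hu.trans' hsub⟩
  · rw [subterm_const hu]
    exact Or.inr ⟨x, hx, heq, c, rfl⟩

/-- If the frontier images of `lam` are CWF then every term of its skeleton is CWF. -/
theorem skel_cwf {lam : Trigger}
    (hf : ∀ x ∈ lam.rule.frontierList, CWF R hc ρ (lam.subst x)) :
    ∀ t ∈ skel lam, CWF R hc ρ t := by
  rintro t (⟨a, ha, s, hs, hsub⟩ | ⟨x, hx, heq, c, rfl⟩)
  · obtain ⟨x, hx, hbirth⟩ := ha
    exact ((hf x hx).births _ hbirth s hs).subterm hsub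
  · exact heq ▸ hf x hx

/-- Frontier images lie in the skeleton. -/
theorem frontier_in_skel {lam : Trigger}
    (hf : ∀ x ∈ lam.rule.frontierList, CWF R hc ρ (lam.subst x)) :
    ∀ x ∈ lam.rule.frontierList, lam.subst x ∈ skel lam := by
  intro x hx
  cases hcase : lam.subst x with
  | const c => exact Or.inr ⟨x, hx, hcase, c, rfl⟩
  | func ρ' i y args =>
    have hcwf := hf x hx
    rw [hcase] at hcwf
    cases hcwf with
    | func _ _ _ hR hy hyb hlen hargs hstrat =>
      obtain ⟨a, ha, hya⟩ := hy
      refine Or.inl ⟨a.map (skolemSubst ρ' (hc ρ' - 1) (frontierSubst ρ' args)), ?_, ?_⟩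
      · refine ⟨x, hx, ?_⟩
        rw [hcase, mem_births_func]
        exact Or.inl ⟨a, ha, rfl⟩
      · refine ⟨skolemSubst ρ' (hc ρ' - 1) (frontierSubst ρ' args) y, mem_args_map hya, ?_⟩
        rw [skolemSubst_ex hyb, frontier_mapback hlen, ← hcase]
        exact .refl _

theorem huc_of_skel {lam : Trigger} {t : GTerm} (h : t ∈ skel lam) : huc lam t = t := if_pos h

theorem huc_func_not_skel {lam : Trigger} {ρ' i y args}
    (h : (GTerm.func ρ' i y args) ∉ skel lam) :
    huc lam (.func ρ' i y args) = .const (.skolemConst ρ' i y) := by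
  simp only [huc, if_neg h]

theorem huc_star (lam : Trigger) : huc lam (.const .star) = .const .star := by
  by_cases h : (GTerm.const Const.star) ∈ skel lam
  · exact huc_of_skel h
  · simp only [huc, if_neg h]

theorem huc_skolemConst (lam : Trigger) (ρ' i y) :
    huc lam (.const (.skolemConst ρ' i y)) = .const (.skolemConst ρ' i y) := by
  by_cases h : (GTerm.const (Const.skolemConst ρ' i y)) ∈ skel lam
  · exact huc_of_skel h
  · simp only [huc, if_neg h]

theorem huc_varConst_not_skel {lam : Trigger} {v : Var}
    (h : (GTerm.const (Const.varConst v)) ∉ skel lam) :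
    huc lam (.const (.varConst v)) = .const .star := by
  simp only [huc, if_neg h]

theorem huc_nat_not_skel {lam : Trigger} {n : ℕ}
    (h : (GTerm.const (Const.nat n)) ∉ skel lam) :
    huc lam (.const (.nat n)) = .const .star := by
  simp only [huc, if_neg h]

theorem huc_idem (lam : Trigger) (t : GTerm) : huc lam (huc lam t) = huc lam t := by
  by_cases h : t ∈ skel lam
  · rw [huc_of_skel h, huc_of_skel h]
  · cases t with
    | const c =>
      cases c with
      | star => rw [huc_star, huc_star]
      | nat n => rw [huc_nat_not_skel h, huc_star]
      | skolemConst ρ' i y => rw [huc_skolemConst, huc_skolemConst]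
      | varConst v => rw [huc_varConst_not_skel h, huc_star]
    | func ρ' i y args => rw [huc_func_not_skel h, huc_skolemConst]


theorem huc_cases (lam : Trigger) (t : GTerm) :
    huc lam t = t ∨ huc lam t = .const .star ∨
      ∃ a b c', huc lam t = .const (.skolemConst a b c') := by
  by_cases h : t ∈ skel lam
  · exact Or.inl (huc_of_skel h)
  · cases t with
    | const c =>
      cases c with
      | star => exact Or.inl (huc_star lam)
      | nat n => exact Or.inr (Or.inl (huc_nat_not_skel h))
      | skolemConst a b c' => exact Or.inl (huc_skolemConst lam a b c')
      | varConst v => exact Or.inr (Or.inl (huc_varConst_not_skel h))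
    | func ρ' i y args => exact Or.inr (Or.inr ⟨ρ', i, y, huc_func_not_skel h⟩)

theorem huc_func_map {lam : Trigger} (hskel : ∀ t ∈ skel lam, CWF R hc ρ t)
    (ρ' : Rule) (i y : ℕ) (L : List GTerm) :
    huc lam (.func ρ' i y (L.map (huc lam))) = huc lam (.func ρ' i y L) := by
  by_cases h : (GTerm.func ρ' i y L) ∈ skel lam
  · have hfix : L.map (huc lam) = L := by
      rw [show L = L.map id from (List.map_id L).symm]
      rw [List.map_map]
      apply List.map_congr_left
      intro ℓ hℓ
      exact huc_of_skel (skel_subterm_closed h (.func ρ' i y hℓ (.refl ℓ)))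
    rw [hfix]
  · have h2 : (GTerm.func ρ' i y (L.map (huc lam))) ∉ skel lam := by
      intro h2
      by_cases hfix : L.map (huc lam) = L
      · rw [hfix] at h2; exact h h2
      · have : ∃ ℓ ∈ L, huc lam ℓ ≠ ℓ := by
          by_contra hall
          push_neg at hall
          exact hfix (by simpa using List.map_congr_left hall)
        obtain ⟨ℓ, hℓ, hne⟩ := this
        have hmem : huc lam ℓ ∈ skel lam :=
          skel_subterm_closed h2 (.func ρ' i y (List.mem_map.2 ⟨ℓ, hℓ, rfl⟩) (.refl _))
        have hcwf := hskel _ hmem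
        rcases huc_cases lam ℓ with hfx | hst | ⟨a, b, c', hsk⟩
        · exact hne hfx
        · rw [hst] at hcwf
          obtain ⟨v, hv⟩ := hcwf.const_inv
          simp at hv
        · rw [hsk] at hcwf
          obtain ⟨v, hv⟩ := hcwf.const_inv
          simp at hv
    rw [huc_func_not_skel h, huc_func_not_skel h2]

theorem huc_skolem_invar {lam : Trigger} (hskel : ∀ t ∈ skel lam, CWF R hc ρ t)
    (ρ' : Rule) (i : ℕ) (σ : Subst) (v : Var) :
    huc lam (skolemSubst ρ' i (huc lam ∘ σ) v) = huc lam (skolemSubst ρ' i σ v) := by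
  by_cases hv : v ∈ ρ'.bodyVars
  · rw [skolemSubst_body hv, skolemSubst_body hv]
    exact huc_idem lam (σ v)
  · rw [skolemSubst_ex hv, skolemSubst_ex hv]
    have : ρ'.frontierList.map (huc lam ∘ σ) = (ρ'.frontierList.map σ).map (huc lam) := by
      rw [List.map_map]
    rw [this]
    exact huc_func_map hskel ρ' i v _

theorem huc_rnf {lam : Trigger} (hskel : ∀ t ∈ skel lam, CWF R hc ρ t) (t : GTerm) :
    RNF ρ (huc lam t) := by
  by_cases h : t ∈ skel lam
  · rw [huc_of_skel h]; exact (hskel t h).rnf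
  · cases t with
    | const c =>
      cases c with
      | star => rw [huc_star]; exact RNF_const ρ _
      | nat n => rw [huc_nat_not_skel h]; exact RNF_const ρ _
      | skolemConst a b c' => rw [huc_skolemConst]; exact RNF_const ρ _
      | varConst v => rw [huc_varConst_not_skel h]; exact RNF_const ρ _
    | func ρ' i y args => rw [huc_func_not_skel h]; exact RNF_const ρ _

theorem huc_nrf {lam : Trigger} {t : GTerm} (h : NRF ρ t) : NRF ρ (huc lam t) := by
  by_cases hs : t ∈ skel lam
  · rw [huc_of_skel hs]; exact h
  · cases t with
    | const c =>
      cases c with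
      | star => rw [huc_star]; exact h
      | nat n => rw [huc_nat_not_skel hs]; exact NRF_const ρ _
      | skolemConst a b c' => rw [huc_skolemConst]; exact h
      | varConst v => rw [huc_varConst_not_skel hs]; exact NRF_const ρ _
    | func ρ' i y args => rw [huc_func_not_skel hs]; exact NRF_const ρ _


theorem Oset_oclosed (R : Set Rule) (hc : Rule → ℕ) (lam : Trigger) (h : GTerm → GTerm) :
    Oclosed R hc lam h (Oset R hc lam h) := by
  refine ⟨?_, ?_, ?_⟩
  · intro f hf
    rw [Oset, Set.mem_sInter]
    intro F hF
    exact hF.1 hf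
  · intro f hf
    rw [Oset, Set.mem_sInter]
    intro F hF
    exact hF.2.1 hf
  · intro lam' h1 h2 h3 f hf
    rw [Oset, Set.mem_sInter]
    intro F hF
    refine hF.2.2 lam' h1 ?_ h3 hf
    intro a ha
    exact Set.sInter_subset_of_mem hF (h2 a ha)

theorem baseFacts_sub_Oset (R : Set Rule) (hc : Rule → ℕ) (lam : Trigger) (h : GTerm → GTerm) :
    baseFacts R lam ⊆ Oset R hc lam h := (Oset_oclosed R hc lam h).1

theorem pred_in_preds_head {R : Set Rule} {ρ' : Rule} {h : List (Atom Var)} {a : Atom Var}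
    (hR : ρ' ∈ R) (hh : h ∈ ρ'.heads) (ha : a ∈ h) : a.pred ∈ predsOf R :=
  ⟨ρ', hR, Or.inr ⟨h, hh, a, ha, rfl⟩⟩

theorem pred_in_preds_body {R : Set Rule} {ρ' : Rule} {a : Atom Var}
    (hR : ρ' ∈ R) (ha : a ∈ ρ'.body) : a.pred ∈ predsOf R :=
  ⟨ρ', hR, Or.inl ⟨a, ha, rfl⟩⟩

theorem huc_varConst_base (lam : Trigger) (v : Var) :
    ∃ c : Const, huc lam (.const (.varConst v)) = .const c ∧
      (c ∈ skelConsts lam ∨ c = .star) := by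
  by_cases h : (GTerm.const (Const.varConst v)) ∈ skel lam
  · exact ⟨.varConst v, huc_of_skel h, Or.inl ⟨_, h, .refl _⟩⟩
  · exact ⟨.star, huc_varConst_not_skel h, Or.inr rfl⟩

/-- Image of a `σ_uc`-instantiated atom under `huc` is a base fact. -/
theorem huc_sigmaUC_base {R : Set Rule} {hc : Rule → ℕ} (lam : Trigger) {b : Atom Var}
    (hpred : b.pred ∈ predsOf R) (h : GTerm → GTerm) :
    Atom.map (huc lam) (b.map sigmaUC) ∈ Oset R hc lam h := by
  apply baseFacts_sub_Oset
  constructor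
  · rw [Atom.pred_map, Atom.pred_map]; exact hpred
  · intro t ht
    simp only [Atom.map, List.map_map, List.mem_map] at ht
    obtain ⟨v, hv, rfl⟩ := ht
    obtain ⟨c, hcv, hor⟩ := huc_varConst_base lam v
    exact ⟨c, hcv, hor⟩

/-- Deep triggers: triggers of `ρ` whose chosen disjunct is existential and whose frontier
image contains a `ρ`-functional term. -/
def DeepT (R : Set Rule) (hc : Rule → ℕ) (ρ : Rule) (lam : Trigger) : Prop :=
  lam.rule = ρ ∧ (∀ x ∈ ρ.bodyVars, CWF R hc ρ (lam.subst x)) ∧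
  (∃ a ∈ ρ.heads.getD (hc ρ - 1) [], ∃ y ∈ a.args, y ∉ ρ.bodyVars) ∧
  (∃ x ∈ ρ.frontierList, ¬ NRF ρ (lam.subst x)) ∧
  (∀ v : Var, (lam.subst v).Over R)

/-- The candidate RPC-closed set. -/
def Fb (R : Set Rule) (hc : Rule → ℕ) (ρ : Rule) : FactSet :=
  { a | (∀ t ∈ a.args, CWF R hc ρ t) ∧
      ∀ lam, DeepT R hc ρ lam → Atom.map (huc lam) a ∈ Oset R hc lam (huc lam) }

theorem DeepT.skel_cwf' {lam : Trigger} (h : DeepT R hc ρ lam) :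
    ∀ t ∈ skel lam, CWF R hc ρ t := by
  apply skel_cwf
  intro x hx
  rw [h.1] at hx
  exact h.2.1 x (frontier_sub_bodyVars hx)


theorem deep_blocked (hbad : BADs ρ) (hR : ρ ∈ R) {lam : Trigger}
    (hdeep : DeepT R hc ρ lam) (hload : lam.Loaded (Fb R hc ρ)) :
    lam.Obsolete (Oset R hc lam (huc lam)) := by
  obtain ⟨h', hh, σ₀, hagree, hcases⟩ := hbad
  obtain ⟨ψ, τ⟩ := lam
  have hψ : ψ = ρ := hdeep.1
  subst hψ
  set lam : Trigger := ⟨ψ, τ⟩ with hlam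
  have hskel : ∀ t ∈ skel lam, CWF R hc ψ t := hdeep.skel_cwf'
  have hfskel : ∀ x ∈ ψ.frontierList, τ x ∈ skel lam := by
    intro x hx
    exact frontier_in_skel (fun x hx => hdeep.2.1 x (frontier_sub_bodyVars hx)) x hx
  classical
  refine ⟨h', hh, fun v =>
    if v ∈ ψ.bodyVars then τ v
    else match σ₀ v with
      | .const (.varConst w) => if w ∈ ψ.bodyVars then huc lam (τ w) else .const .star
      | _ => .const .star, fun x hx => if_pos hx, ?_⟩
  intro a ha
  rcases hcases a ha with ⟨b, hb, heq⟩ | hnvc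
  · -- the image is a body instance
    have hfact : Atom.map (huc lam) (b.map τ) ∈ Oset R hc lam (huc lam) :=
      (hload b hb).2 lam hdeep
    have hpred : a.pred = b.pred := by
      have := congrArg Atom.pred heq
      rwa [Atom.pred_map, Atom.pred_map] at this
    have hargs : a.args.map σ₀ = b.args.map sigmaUC := by
      have := congrArg Atom.args heq
      exact this
    have hlen : a.args.length = b.args.length := by
      have := congrArg List.length hargs
      rwa [List.length_map, List.length_map] at this
    have key : a.map (fun v =>
        if v ∈ ψ.bodyVars then τ v
        else match σ₀ v with
          | .const (.varConst w) => if w ∈ ψ.bodyVars then huc lam (τ w) else .const .star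
          | _ => .const .star) = Atom.map (huc lam) (b.map τ) := by
      rw [Atom.map_map]
      have hargsL : List.map (fun v =>
          if v ∈ ψ.bodyVars then τ v
          else match σ₀ v with
            | .const (.varConst w) => if w ∈ ψ.bodyVars then huc lam (τ w) else .const .star
            | _ => .const .star) a.args = List.map (huc lam ∘ τ) b.args := by
        apply List.ext_getElem
        · rw [List.length_map, List.length_map]; exact hlen
        · intro k hk1 hk2
          rw [List.getElem_map, List.getElem_map]
          have hk1' : k < a.args.length := by rwa [List.length_map] at hk1
          have hk2' : k < b.args.length := by rwa [List.length_map] at hk2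
          have hpt : σ₀ a.args[k] = sigmaUC b.args[k] := by
            have h1 := congrArg (fun l => l.getD k (GTerm.const .star)) hargs
            simp only [List.getD_eq_getElem?_getD, List.getElem?_map] at h1
            rw [List.getElem?_eq_getElem hk1', List.getElem?_eq_getElem hk2'] at h1
            simpa using h1
          set α := a.args[k] with hα
          set β := b.args[k] with hβ
          have hβb : β ∈ ψ.bodyVars :=
            mem_bodyVars_iff.2 ⟨b, hb, List.getElem_mem hk2'⟩
          by_cases hab : α ∈ ψ.bodyVars
          · rw [if_pos hab]
            have : sigmaUC α = sigmaUC β := by rw [← hagree α hab, hpt]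
            have hαβ : α = β := by
              simpa [sigmaUC] using this
            show τ α = (huc lam ∘ τ) β
            rw [← hαβ]
            have : τ α ∈ skel lam := hfskel α (mem_frontier_of hab hh ha (List.getElem_mem hk1'))
            simp only [Function.comp]
            rw [huc_of_skel this]
          · rw [if_neg hab]
            rw [hpt]
            show (match sigmaUC β with
              | .const (.varConst w) => if w ∈ ψ.bodyVars then huc lam (τ w) else .const .star
              | _ => .const .star) = (huc lam ∘ τ) β
            simp only [sigmaUC]
            rw [if_pos hβb]
            rfl
      show Atom.mk _ _ = Atom.mk _ _
      exact congrArg₂ Atom.mk hpred hargsL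
    rw [key]
    exact hfact
  · -- the image is a star fact
    apply baseFacts_sub_Oset
    constructor
    · rw [Atom.pred_map]
      exact pred_in_preds_head hR hh ha
    · intro t ht
      simp only [Atom.map, List.mem_map] at ht
      obtain ⟨α, hαa, rfl⟩ := ht
      have hnb : α ∉ ψ.bodyVars := by
        intro hab
        have harg : σ₀ α ∈ (a.map σ₀).args := mem_args_map hαa
        have := hnvc _ harg α
        rw [hagree α hab] at harg this
        exact this (.refl _)
      rw [if_neg hnb]
      refine ⟨.star, ?_, Or.inr rfl⟩
      have hnv : ∀ w, σ₀ α ≠ .const (.varConst w) := by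
        intro w hw
        have harg : σ₀ α ∈ (a.map σ₀).args := mem_args_map hαa
        have := hnvc _ harg w
        rw [hw] at this
        exact this (.refl _)
      cases hval : σ₀ α with
      | const c =>
        cases c with
        | star => rfl
        | nat n => rfl
        | skolemConst x y z => rfl
        | varConst w => exact absurd hval (hnv w)
      | func ρ' i y args => rfl


theorem out_sub_Fb (hρR : ρ ∈ R) {lam : Trigger}
    (hRl : lam.rule ∈ R) (hOver : ∀ v : Var, (lam.subst v).Over R)
    (hload : lam.Loaded (Fb R hc ρ))
    (Hnd : lam.rule = ρ →
      (∃ a ∈ ρ.heads.getD (hc ρ - 1) [], ∃ y ∈ a.args, y ∉ ρ.bodyVars) →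
      ∀ x ∈ ρ.frontierList, NRF ρ (lam.subst x)) :
    outHC hc lam ⊆ Fb R hc ρ := by
  obtain ⟨ρ₀, τ⟩ := lam
  simp only at hRl hOver Hnd
  have hbodyCWF : ∀ v ∈ ρ₀.bodyVars, CWF R hc ρ (τ v) := by
    intro v hv
    obtain ⟨b, hb, hvb⟩ := mem_bodyVars_iff.1 hv
    exact (hload b hb).1 _ (mem_args_map hvb)
  intro f hf
  obtain ⟨a, ha, rfl⟩ := hf
  have hhmem := mem_getD_nil ha
  constructor
  · -- CWF of the arguments
    intro t ht
    simp only [Atom.map, List.mem_map] at ht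
    obtain ⟨v, hv, rfl⟩ := ht
    by_cases hvb : v ∈ ρ₀.bodyVars
    · rw [skolemSubst_body hvb]; exact hbodyCWF v hvb
    · rw [skolemSubst_ex hvb]
      refine CWF.func ρ₀ v _ hRl ⟨a, ha, hv⟩ hvb (by rw [List.length_map]) ?_ ?_
      · intro s hs
        rw [List.mem_map] at hs
        obtain ⟨x, hx, rfl⟩ := hs
        exact hbodyCWF x (frontier_sub_bodyVars hx)
      · rintro rfl s hs
        rw [List.mem_map] at hs
        obtain ⟨x, hx, rfl⟩ := hs
        exact Hnd rfl ⟨a, ha, v, hv, hvb⟩ x hx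
  · -- the over-approximation invariant
    intro lamD hdeep
    have hskelD : ∀ u ∈ skel lamD, CWF R hc ρ u := hdeep.skel_cwf'
    set σ' : Subst := huc lamD ∘ τ with hσ'
    have hrt : RTrigger R ⟨ρ₀, σ'⟩ := by
      refine ⟨hRl, fun v => ?_⟩
      rcases huc_cases lamD (τ v) with hfx | hst | ⟨x, y, z, hsk⟩
      · show ((huc lamD ∘ τ) v).Over R
        simp only [Function.comp]
        rw [hfx]; exact hOver v
      · show ((huc lamD ∘ τ) v).Over R
        simp only [Function.comp]
        rw [hst]; exact .const _
      · show ((huc lamD ∘ τ) v).Over R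
        simp only [Function.comp]
        rw [hsk]; exact .const _
    have hld : Trigger.Loaded ⟨ρ₀, σ'⟩ (Oset R hc lamD (huc lamD)) := by
      intro b hb
      show b.map (huc lamD ∘ τ) ∈ _
      rw [← Atom.map_map]
      exact (hload b hb).2 lamD hdeep
    have hne : outHC hc ⟨ρ₀, σ'⟩ ≠ outHC hc lamD := by
      -- exhibit a fact of `outHC lamD` with a non-RNF argument
      obtain ⟨ψ, τD⟩ := lamD
      have hψ : ψ = ρ := hdeep.1
      subst hψ
      obtain ⟨aD, haD, yD, hyD, hybD⟩ := hdeep.2.2.1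
      obtain ⟨xD, hxD, hnrfD⟩ := hdeep.2.2.2.1
      intro heq
      have hfD : (aD.map (skolemSubst ψ (hc ψ - 1) τD)) ∈ outHC hc (⟨ψ, τD⟩ : Trigger) :=
        ⟨aD, haD, rfl⟩
      rw [← heq] at hfD
      obtain ⟨a', ha', heq'⟩ := hfD
      -- every argument of a fact of `outHC ⟨ρ₀, σ'⟩` is RNF
      have hRNF : ∀ u ∈ (a'.map (skolemSubst ρ₀ (hc ρ₀ - 1) σ')).args, RNF ψ u := by
        intro u hu
        simp only [Atom.map, List.mem_map] at hu
        obtain ⟨v, hv, rfl⟩ := hu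
        by_cases hvb : v ∈ ρ₀.bodyVars
        · rw [skolemSubst_body hvb]
          exact huc_rnf hskelD (τ v)
        · rw [skolemSubst_ex hvb]
          refine RNF_func ?_ ?_
          · intro ℓ hℓ
            rw [List.mem_map] at hℓ
            obtain ⟨x, hx, rfl⟩ := hℓ
            exact huc_rnf hskelD (τ x)
          · rintro rfl ℓ hℓ
            rw [List.mem_map] at hℓ
            obtain ⟨x, hx, rfl⟩ := hℓ
            exact huc_nrf (Hnd rfl ⟨a', ha', v, hv, hvb⟩ x hx)
      rw [← heq'] at hRNF
      have hbadarg : ¬ RNF ψ (skolemSubst ψ (hc ψ - 1) τD yD) := by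
        rw [skolemSubst_ex hybD]
        intro hrnf
        exact hnrfD (hrnf (hc ψ - 1) yD _ (.refl _) (τD xD)
          (List.mem_map.2 ⟨xD, hxD, rfl⟩))
      exact hbadarg (hRNF _ (mem_args_map hyD))
    have himg := (Oset_oclosed R hc lamD (huc lamD)).2.2 ⟨ρ₀, σ'⟩ hrt hld hne
    have hmem : Atom.map (huc lamD) (a.map (skolemSubst ρ₀ (hc ρ₀ - 1) σ')) ∈
        Oset R hc lamD (huc lamD) :=
      himg ⟨a.map (skolemSubst ρ₀ (hc ρ₀ - 1) σ'), ⟨a, ha, rfl⟩, rfl⟩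
    have hkey : Atom.map (huc lamD) (a.map (skolemSubst ρ₀ (hc ρ₀ - 1) τ)) =
        Atom.map (huc lamD) (a.map (skolemSubst ρ₀ (hc ρ₀ - 1) σ')) := by
      rw [Atom.map_map, Atom.map_map]
      show Atom.mk _ _ = Atom.mk _ _
      refine congrArg₂ Atom.mk rfl ?_
      apply List.map_congr_left
      intro v _
      exact (huc_skolem_invar hskelD ρ₀ (hc ρ₀ - 1) τ v).symm
    rw [hkey]
    exact hmem

theorem Fb_rpcclosed (hbad : BADs ρ) (hρR : ρ ∈ R) : RPCclosed R hc ρ (Fb R hc ρ) := by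
  have hDB : ruleDB ρ ⊆ Fb R hc ρ := by
    rintro f ⟨b, hb, rfl⟩
    constructor
    · intro t ht
      simp only [Atom.map, List.mem_map] at ht
      obtain ⟨v, hv, rfl⟩ := ht
      exact .var v
    · intro lamD _
      exact huc_sigmaUC_base lamD (pred_in_preds_body hρR hb) (huc lamD)
  refine ⟨hDB, ?_, ?_⟩
  · -- out of the initial trigger
    apply out_sub_Fb hρR hρR (fun v => .const _)
    · intro b hb
      exact hDB ⟨b, hb, rfl⟩
    · intro _ _ x _
      exact NRF_const ρ _
  · intro lam hRT hnc hload hUc hinj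
    by_cases hdc : lam.rule = ρ ∧
        (∃ a ∈ ρ.heads.getD (hc ρ - 1) [], ∃ y ∈ a.args, y ∉ ρ.bodyVars) ∧
        (∃ x ∈ ρ.frontierList, ¬ NRF ρ (lam.subst x))
    · -- deep trigger: contradiction with uc-unblockability
      exfalso
      obtain ⟨hr, hex, hdp⟩ := hdc
      have hdeep : DeepT R hc ρ lam := by
        refine ⟨hr, ?_, hex, hdp, hRT.2⟩
        intro x hx
        obtain ⟨b, hb, hvb⟩ := mem_bodyVars_iff.1 (show x ∈ lam.rule.bodyVars from hr ▸ hx)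
        exact (hload b hb).1 _ (mem_args_map hvb)
      have hobs := deep_blocked hbad hρR hdeep hload
      rcases hUc with hdat | hnobs
      · obtain ⟨a, ha, y, hy, hyb⟩ := hex
        have hmem' : ρ.heads.getD (hc ρ - 1) [] ∈ lam.rule.heads := by
          rw [hr]; exact mem_getD_nil ha
        have := hdat.2 _ hmem' a ha y hy
        rw [hr] at this
        exact hyb this
      · exact hnobs hobs
    · apply out_sub_Fb hρR hRT.1 hRT.2 hload
      intro hr hex
      by_contra hcon
      push_neg at hcon
      obtain ⟨x, hx, hnrf⟩ := hcon
      exact hdc ⟨hr, hex, ⟨x, hx, fun h => hnrf h⟩⟩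

theorem bads_not_cyclic (hbad : BADs ρ) (hρR : ρ ∈ R) (t : GTerm)
    (hcyc : RuleCyclic ρ t) (hocc : t.OccursIn (RPCset R hc ρ)) : False := by
  have hsub : RPCset R hc ρ ⊆ Fb R hc ρ :=
    Set.sInter_subset_of_mem (Fb_rpcclosed hbad hρR)
  obtain ⟨a, haF, s, hs, hsubt⟩ := hocc
  have hcwf : CWF R hc ρ t := ((hsub haF).1 s hs).subterm hsubt
  obtain ⟨i, y, args, rfl, s', hs', args', hsub'⟩ := hcyc
  exact hcwf.rnf i y args (.refl _) s' hs' i y args' hsub'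


end PartB


section PartA

/-- The `n`-th disjoint copy substitution. -/
def sigN (n : ℕ) : Subst := fun x => .const (.nat (Nat.pair n x))

/-- Infinitely many disjoint copies of the body of `ρ`. -/
def copiesD (ρ : Rule) : FactSet := { f | ∃ n : ℕ, ∃ b ∈ ρ.body, f = b.map (sigN n) }

def CleanNat (t : GTerm) : Prop := ∀ c, GTerm.Subterm (.const c) t → ∃ m, c = .nat m

def OnlyNat (a : Fact) : Prop := ∀ t ∈ a.args, CleanNat t

theorem ff_copies (ρ : Rule) : FunctionFree (copiesD ρ) := by
  rintro f ⟨n, b, hb, rfl⟩ t ht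
  simp only [Atom.map, List.mem_map] at ht
  obtain ⟨v, hv, rfl⟩ := ht
  exact ⟨_, rfl⟩

theorem loaded_copies (ρ : Rule) (n : ℕ) :
    Trigger.Loaded ⟨ρ, sigN n⟩ (copiesD ρ) := fun b hb => ⟨n, b, hb, rfl⟩

theorem out_finite (lam : Trigger) (i : ℕ) : (lam.out i).Finite := by
  have : lam.out i ⊆ (fun a : Atom Var => a.map (skolemSubst lam.rule i lam.subst)) ''
      { a | a ∈ lam.rule.heads.getD i [] } := by
    rintro f ⟨a, ha, rfl⟩
    exact ⟨a, ha, rfl⟩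
  exact Set.Finite.subset (Set.Finite.image _ (List.finite_toSet _)) this

theorem cleanNat_const (n : ℕ) : CleanNat (.const (.nat n)) := by
  intro c hsub
  obtain ⟨rfl⟩ := GTerm.const.inj (subterm_const hsub)
  exact ⟨n, rfl⟩

theorem cleanNat_func {ρ' i y args} (h : ∀ ℓ ∈ args, CleanNat ℓ) :
    CleanNat (.func ρ' i y args) := by
  intro c hsub
  rcases subterm_func hsub with heq | ⟨s, hs, hsub'⟩
  · exact absurd heq (by simp)
  · exact h s hs c hsub'

theorem subConsts_finite (t : GTerm) : {c : Const | GTerm.Subterm (.const c) t}.Finite := by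
  induction t using GTerm.ind' with
  | h1 c =>
    apply Set.Finite.subset (Set.finite_singleton c)
    intro c' hc'
    obtain ⟨rfl⟩ := GTerm.const.inj (subterm_const hc')
    rfl
  | h2 ρ' i y args ih =>
    have : {c : Const | GTerm.Subterm (.const c) (.func ρ' i y args)} ⊆
        ⋃ s ∈ { s | s ∈ args }, {c | GTerm.Subterm (.const c) s} := by
      intro c hc
      rcases subterm_func hc with heq | ⟨s, hs, hsub⟩
      · exact absurd heq (by simp)
      · exact Set.mem_biUnion hs hsub
    exact Set.Finite.subset (Set.Finite.biUnion (List.finite_toSet args) ih) this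

/-- The renaming of the constants of copy `n` back to the generic constants `c_x`. -/
def grn (n : ℕ) : CMap := fun c =>
  match c with
  | .nat m => if m.unpair.1 = n then some (.const (.varConst m.unpair.2)) else none
  | _ => none

theorem rn_pair (n x : ℕ) :
    applyCM (grn n) (.const (.nat (Nat.pair n x))) = .const (.varConst x) := by
  rw [applyCM_const]
  simp [grn, Nat.unpair_pair]

theorem rn_pair_ne {n m β : ℕ} (h : m ≠ n) :
    applyCM (grn n) (.const (.nat (Nat.pair m β))) = .const (.nat (Nat.pair m β)) := by
  rw [applyCM_const]
  simp [grn, Nat.unpair_pair, h]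

theorem NoVC_func {ρ' i y args} (h : ∀ ℓ ∈ args, NoVC ℓ) : NoVC (.func ρ' i y args) := by
  intro v hsub
  rcases subterm_func hsub with heq | ⟨s, hs, hsub'⟩
  · exact absurd heq (by simp)
  · exact h s hs v hsub'

theorem rn_noVC {n : ℕ} {t : GTerm} (hclean : CleanNat t)
    (hno : ∀ x, ¬ GTerm.Subterm (.const (.nat (Nat.pair n x))) t) :
    NoVC (applyCM (grn n) t) := by
  induction t using GTerm.ind' with
  | h1 c =>
    obtain ⟨m, rfl⟩ := hclean c (.refl _)
    by_cases hm : m.unpair.1 = n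
    · exfalso
      apply hno m.unpair.2
      have : Nat.pair n m.unpair.2 = m := by
        conv_rhs => rw [← Nat.pair_unpair m]
        rw [hm]
      rw [this]
      exact .refl _
    · rw [applyCM_const]
      have hgn : grn n (.nat m) = none := by simp [grn, hm]
      rw [hgn, Option.getD_none]
      intro v hsub
      have := subterm_const hsub
      simp at this
  | h2 ρ' i y args ih =>
    rw [applyCM_func]
    apply NoVC_func
    intro ℓ hℓ
    rw [List.mem_map] at hℓ
    obtain ⟨s, hs, rfl⟩ := hℓ
    refine ih s hs (fun c hsub => hclean c (hsub.trans' (.func ρ' i y hs (.refl s)))) ?_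
    intro x hsub
    exact hno x (hsub.trans' (.func ρ' i y hs (.refl s)))


theorem edge_out {R : Set Rule} {D : FactSet} (T : ChaseTree R D) {v w : T.V}
    (hvw : T.E v w) :
    ∃ lam : Trigger, RTrigger R lam ∧ lam.Loaded (T.fl v) ∧ ∃ i, T.fl w = T.fl v ∪ lam.out i := by
  obtain ⟨lam, h1, h2, _, _, f, _, _, hsurj, hlab⟩ := T.expand v ⟨w, hvw⟩
  obtain ⟨i, rfl⟩ := hsurj w hvw
  exact ⟨lam, h1, h2, i.1, (hlab i).1⟩

theorem out_onlyNat {F : FactSet} (honly : ∀ a ∈ F, OnlyNat a) {lam : Trigger}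
    (hload : lam.Loaded F) (i : ℕ) : ∀ f ∈ lam.out i, OnlyNat f := by
  rintro f ⟨a, ha, rfl⟩ t ht
  simp only [Atom.map, List.mem_map] at ht
  obtain ⟨v, hv, rfl⟩ := ht
  by_cases hvb : v ∈ lam.rule.bodyVars
  · rw [skolemSubst_body hvb]
    obtain ⟨b, hb, hvb'⟩ := mem_bodyVars_iff.1 hvb
    exact honly _ (hload b hb) _ (mem_args_map hvb')
  · rw [skolemSubst_ex hvb]
    apply cleanNat_func
    intro ℓ hℓ
    rw [List.mem_map] at hℓ
    obtain ⟨x, hx, rfl⟩ := hℓ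
    obtain ⟨b, hb, hvb'⟩ := mem_bodyVars_iff.1 (frontier_sub_bodyVars hx)
    exact honly _ (hload b hb) _ (mem_args_map hvb')

theorem tree_inv {R : Set Rule} {ρ : Rule} (T : ChaseTree R (copiesD ρ)) (v : T.V) :
    ∃ N : FactSet, N.Finite ∧ T.fl v = copiesD ρ ∪ N ∧ ∀ a ∈ T.fl v, OnlyNat a := by
  have hreach := T.reach_root v
  induction hreach with
  | refl =>
    refine ⟨∅, Set.finite_empty, by rw [T.root_label]; simp, ?_⟩
    rw [T.root_label]
    rintro a ⟨n, b, hb, rfl⟩ t ht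
    simp only [Atom.map, List.mem_map] at ht
    obtain ⟨x, hx, rfl⟩ := ht
    exact cleanNat_const _
  | tail hab hbc ih =>
    obtain ⟨N, hNfin, hEq, honly⟩ := ih
    obtain ⟨lam, hRT, hload, i, hEq'⟩ := edge_out T hbc
    refine ⟨N ∪ lam.out i, hNfin.union (out_finite lam i), ?_, ?_⟩
    · rw [hEq', hEq, Set.union_assoc]
    · intro a ha
      rw [hEq'] at ha
      rcases ha with ha | ha
      · exact honly a ha
      · exact out_onlyNat honly hload i a ha

theorem D_sub_fl {R : Set Rule} {ρ : Rule} (T : ChaseTree R (copiesD ρ)) (v : T.V) :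
    copiesD ρ ⊆ T.fl v := by
  obtain ⟨N, _, hEq, _⟩ := tree_inv T v
  rw [hEq]
  exact Set.subset_union_left

theorem epow_append {V : Type _} {E : V → V → Prop} :
    ∀ (k : ℕ) {a b c : V}, EPow E k a b → E b c → EPow E (k + 1) a c := by
  intro k
  induction k with
  | zero =>
    intro a b c h hbc
    exact ⟨c, by rw [show a = b from h]; exact hbc, rfl⟩
  | succ k ih =>
    intro a b c h hbc
    obtain ⟨d, had, hdb⟩ := h
    exact ⟨d, had, ih hdb hbc⟩


theorem lemA {R : Set Rule} {ρ : Rule} (hρR : ρ ∈ R) (hbad : ¬ BADs ρ) :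
    NeverTerminates R := by
  classical
  refine ⟨copiesD ρ, ff_copies ρ, ?_⟩
  rintro ⟨T, hfin⟩
  -- every copy trigger is eventually obsolete somewhere in the tree
  have obs : ∀ n : ℕ, ∃ w : T.V, Trigger.Obsolete ⟨ρ, sigN n⟩ (T.fl w) := by
    by_cases hleaf : ∃ v : T.V, ∀ c, ¬ T.E v c
    · obtain ⟨v, hv⟩ := hleaf
      intro n
      refine ⟨v, T.leaf_sat v hv ρ hρR (sigN n) ?_⟩
      intro b hb
      exact D_sub_fl T v ⟨n, b, hb, rfl⟩
    · push_neg at hleaf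
      intro n
      have hRT : RTrigger R ⟨ρ, sigN n⟩ := ⟨hρR, fun x => .const _⟩
      obtain ⟨k, hk⟩ := T.fairness _ hRT T.root
        (by rw [T.root_label]; exact loaded_copies ρ n)
      have hreach : ∀ j : ℕ, ∃ u : T.V, EPow T.E j T.root u := by
        intro j
        induction j with
        | zero => exact ⟨T.root, rfl⟩
        | succ j ih =>
          obtain ⟨u, hu⟩ := ih
          obtain ⟨c, hcu⟩ := hleaf u
          exact ⟨c, epow_append j hu hcu⟩
      obtain ⟨u, hu⟩ := hreach k
      exact ⟨u, hk u hu⟩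
  set wfun : ℕ → T.V := fun n => Classical.choose (obs n) with hwfun
  have hw : ∀ n, Trigger.Obsolete ⟨ρ, sigN n⟩ (T.fl (wfun n)) :=
    fun n => Classical.choose_spec (obs n)
  obtain ⟨winf, hinf⟩ := Finite.exists_infinite_fiber wfun
  have hS : (wfun ⁻¹' {winf}).Infinite := Set.infinite_coe_iff.mp hinf
  set S : Set ℕ := wfun ⁻¹' {winf} with hSdef
  obtain ⟨N, hNfin, hflEq, honly⟩ := tree_inv T winf
  have hObsS : ∀ n ∈ S, Trigger.Obsolete ⟨ρ, sigN n⟩ (T.fl winf) := by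
    intro n hn
    have := hw n
    rwa [show wfun n = winf from hn] at this
  -- pigeonhole on head disjuncts
  have hex : ∃ hd ∈ ρ.heads,
      {n | n ∈ S ∧ ∃ σ' : Subst, (∀ x ∈ ρ.bodyVars, σ' x = sigN n x) ∧
        ∀ a ∈ hd, a.map σ' ∈ T.fl winf}.Infinite := by
    by_contra hcon
    push_neg at hcon
    apply hS
    have hsub : S ⊆ ⋃ hd ∈ { h | h ∈ ρ.heads },
        {n | n ∈ S ∧ ∃ σ' : Subst, (∀ x ∈ ρ.bodyVars, σ' x = sigN n x) ∧
          ∀ a ∈ hd, a.map σ' ∈ T.fl winf} := by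
      intro n hn
      obtain ⟨hd, hhd, σ', hagr, hsat⟩ := hObsS n hn
      exact Set.mem_biUnion hhd ⟨hn, σ', hagr, hsat⟩
    refine Set.Finite.subset (Set.Finite.biUnion (List.finite_toSet _) ?_) hsub
    intro hd hhd
    exact hcon hd hhd
  obtain ⟨hd, hhd, hSinf⟩ := hex
  -- the copies mentioned in `N`
  set BadN : Set ℕ :=
    {n | ∃ f ∈ N, ∃ t ∈ f.args, ∃ x, GTerm.Subterm (.const (.nat (Nat.pair n x))) t}
    with hBadN
  have hBfin : BadN.Finite := by
    have hsub : BadN ⊆ ⋃ f ∈ N, ⋃ t ∈ { t | t ∈ f.args },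
        (fun c : Const => match c with | .nat m => m.unpair.1 | _ => 0) ''
          {c | GTerm.Subterm (.const c) t} := by
      rintro n ⟨f, hf, t, ht, x, hsub⟩
      refine Set.mem_biUnion hf (Set.mem_biUnion ht ⟨.nat (Nat.pair n x), hsub, ?_⟩)
      simp [Nat.unpair_pair]
    refine Set.Finite.subset (Set.Finite.biUnion hNfin ?_) hsub
    intro f hf
    exact Set.Finite.biUnion (List.finite_toSet _) fun t ht =>
      (subConsts_finite t).image _
  obtain ⟨n, hnS, hnB⟩ := (hSinf.diff hBfin).nonempty
  obtain ⟨hnS', σ', hagree, hsat⟩ := hnS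
  -- build the BADs witness
  apply hbad
  refine ⟨hd, hhd, fun v => if v ∈ ρ.bodyVars then sigmaUC v else applyCM (grn n) (σ' v),
    fun x hx => if_pos hx, ?_⟩
  intro a ha
  have hmem := hsat a ha
  rw [hflEq] at hmem
  set σ'' : Subst := fun v => if v ∈ ρ.bodyVars then sigmaUC v else applyCM (grn n) (σ' v)
    with hσ''
  rcases hmem with ⟨m, b, hb, heqD⟩ | hN
  · -- image lies in copy `m`
    have hpred : a.pred = b.pred := by
      have := congrArg Atom.pred heqD
      rwa [Atom.pred_map, Atom.pred_map] at this
    have hargs : a.args.map σ' = b.args.map (sigN m) := congrArg Atom.args heqD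
    have hlen : a.args.length = b.args.length := by
      have := congrArg List.length hargs
      rwa [List.length_map, List.length_map] at this
    have hpt : ∀ k (hk1 : k < a.args.length) (hk2 : k < b.args.length),
        σ' a.args[k] = sigN m b.args[k] := by
      intro k hk1 hk2
      have h1 := congrArg (fun l => l.getD k (GTerm.const .star)) hargs
      simp only [List.getD_eq_getElem?_getD, List.getElem?_map] at h1
      rw [List.getElem?_eq_getElem hk1, List.getElem?_eq_getElem hk2] at h1
      simpa using h1
    by_cases hm : m = n
    · subst hm
      left
      refine ⟨b, hb, ?_⟩
      show Atom.mk _ _ = Atom.mk _ _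
      refine congrArg₂ Atom.mk hpred ?_
      apply List.ext_getElem
      · rw [List.length_map, List.length_map]; exact hlen
      · intro k hk1 hk2
        rw [List.getElem_map, List.getElem_map]
        have hk1' : k < a.args.length := by rwa [List.length_map] at hk1
        have hk2' : k < b.args.length := by rwa [List.length_map] at hk2
        have hp := hpt k hk1' hk2'
        by_cases hab : a.args[k] ∈ ρ.bodyVars
        · rw [hagree _ hab] at hp
          have : a.args[k] = b.args[k] := by
            have := GTerm.const.inj hp
            have := Const.nat.inj this
            exact (Nat.pair_eq_pair.mp this).2
          simp only [hσ'']
          rw [if_pos hab, this]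
        · simp only [hσ'']
          rw [if_neg hab, hp]
          simp only [sigN, sigmaUC]
          exact rn_pair _ _
    · right
      intro t ht
      simp only [Atom.map, List.mem_map] at ht
      obtain ⟨α, hαa, rfl⟩ := ht
      obtain ⟨k, hk1, rfl⟩ := List.mem_iff_getElem.mp hαa
      have hk2 : k < b.args.length := by omega
      have hp := hpt k hk1 hk2
      have hab : a.args[k] ∉ ρ.bodyVars := by
        intro hab
        rw [hagree _ hab] at hp
        have := Const.nat.inj (GTerm.const.inj hp)
        exact hm ((Nat.pair_eq_pair.mp this).1.symm)
      simp only [hσ'']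
      rw [if_neg hab, hp]
      simp only [sigN]
      rw [rn_pair_ne hm]
      intro v hsub
      have := subterm_const hsub
      simp at this
  · -- image lies in `N`
    right
    intro t ht
    simp only [Atom.map, List.mem_map] at ht
    obtain ⟨α, hαa, rfl⟩ := ht
    have hab : α ∉ ρ.bodyVars := by
      intro hab
      apply hnB
      refine ⟨a.map σ', hN, σ' α, mem_args_map hαa, α, ?_⟩
      rw [hagree _ hab]
      exact .refl _
    simp only [hσ'']
    rw [if_neg hab]
    apply rn_noVC
    · exact honly _ (hflEq ▸ Set.mem_union_right _ hN) _ (mem_args_map hαa)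
    · intro x hsub
      exact hnB ⟨a.map σ', hN, σ' α, mem_args_map hαa, x, hsub⟩


end PartA


/-- Theorem: if a rule set is `RPC_s`, then it never-terminates. -/
theorem rpcs_never_terminates (R : Set Rule) : IsRPCs R → NeverTerminates R := by
  rintro ⟨i, h1, h2, ρ, hρR, t, hcyc, hocc⟩
  by_cases hb : BADs ρ
  · exact (bads_not_cyclic hb hρR t hcyc hocc).elim
  · exact lemA hρR hb

end
end DisjChase
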